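/- Fix a finite group L, θ ∈ Aut(L), and an odd integer t ≥ 3. Let ℓ ∈ L^θ be an involution. If the conjugacy class O^{L^θ}_ℓ of ℓ in the fixed-point subgroup L^θ, viewed as a rack with the conjugation operation, is of type D, then the twisted homogeneous rack C_ℓ of class (L, t, θ) is of type D. -/
import Mathlib


/-- A nonempty subset of `X` closed under the operation `op` (a subrack). -/
def IsSubrackOf {X : Type*} (op : X → X → X) (Y : Set X) : Prop :=
  Y.Nonempty ∧ ∀ a ∈ Y, ∀ b ∈ Y, op a b ∈ Y

/-- The rack with underlying set `C ⊆ X` and operation `op` is of type D: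
there is a decomposable subrack `R ⊔ S` of `C` and `r ∈ R`, `s ∈ S` with
`r ▹ (s ▹ (r ▹ s)) ≠ s`. -/
def IsTypeDOn {X : Type*} (op : X → X → X) (C : Set X) : Prop :=
  ∃ R S : Set X, R ⊆ C ∧ S ⊆ C ∧ IsSubrackOf op R ∧ IsSubrackOf op S ∧
    Disjoint R S ∧
    (∀ r ∈ R, ∀ s ∈ S, op r s ∈ S) ∧ (∀ s ∈ S, ∀ r ∈ R, op s r ∈ R) ∧
    ∃ r ∈ R, ∃ s ∈ S, op r (op s (op r s)) ≠ s

/-- The automorphism `u` of `L^t`: `u(ℓ₁, …, ℓ_t) = (θ(ℓ_t), ℓ₁, …, ℓ_{t-1})`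
(indices `0, …, t-1`, so coordinate `0` is `ℓ₁` and coordinate `t-1` is `ℓ_t`). -/
def thrU {L : Type*} [Group L] (θ : L ≃* L) (t : ℕ) (x : Fin t → L) : Fin t → L :=
  fun i => if (i : ℕ) = 0 then θ (x ⟨t - 1, by have := i.2; omega⟩)
    else x ⟨(i : ℕ) - 1, by have := i.2; omega⟩

/-- The rack operation `y ▹ z = y · u(z · y⁻¹)` on `L^t`. -/
def thrOp {L : Type*} [Group L] (θ : L ≃* L) (t : ℕ) (y z : Fin t → L) : Fin t → L :=
  y * thrU θ t (z * y⁻¹)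

/-- The element `(e, …, e, ℓ)` of `L^t`. -/
def thrBase {L : Type*} [Group L] (t : ℕ) (ℓ : L) : Fin t → L :=
  fun i => if (i : ℕ) = t - 1 then ℓ else 1

/-- The twisted conjugacy class (twisted homogeneous rack) of `x ∈ L^t`
with respect to `u`, i.e. the orbit of `x` under `g ⇀ x = g · x · u(g)⁻¹`. -/
def thrClassOf {L : Type*} [Group L] (θ : L ≃* L) (t : ℕ) (x : Fin t → L) :
    Set (Fin t → L) :=
  {y | ∃ g : Fin t → L, g * x * (thrU θ t g)⁻¹ = y}

/-- The twisted homogeneous rack `C_ℓ = C_{(e,…,e,ℓ)}` of class `(L, t, θ)`. -/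
def thrClass {L : Type*} [Group L] (θ : L ≃* L) (t : ℕ) (ℓ : L) : Set (Fin t → L) :=
  thrClassOf θ t (thrBase t ℓ)

/-- The twisted conjugacy class `O^{L,θ}_ℓ = {a·ℓ·θ(a)⁻¹ : a ∈ L}`. -/
def twConjClass {L : Type*} [Group L] (θ : L ≃* L) (ℓ : L) : Set L :=
  {k | ∃ a : L, a * ℓ * (θ a)⁻¹ = k}

lemma thrOp_diag {L : Type*} [Group L] (θ : L ≃* L) (t : ℕ) {a b : L}
    (ha : θ a = a) (hb : θ b = b) :
    thrOp θ t (fun _ => a) (fun _ => b) = fun _ => a * b * a⁻¹ := by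
  funext i
  simp only [thrOp, thrU, Pi.mul_apply, Pi.inv_apply]
  split <;> simp [map_mul, map_inv, ha, hb, mul_assoc]

lemma diag_mem_thrClass {L : Type*} [Group L] (θ : L ≃* L) (t : ℕ)
    (ht : 3 ≤ t) (htodd : Odd t) {ℓ : L} (hθℓ : θ ℓ = ℓ)
    (hℓ2 : ℓ ^ 2 = 1) {g : L} (hg : θ g = g) :
    (fun _ => g * ℓ * g⁻¹ : Fin t → L) ∈ thrClass θ t ℓ := by
  set k := g * ℓ * g⁻¹ with hk
  have hll : ℓ * ℓ = 1 := by rw [← pow_two]; exact hℓ2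
  have hℓinv : ℓ⁻¹ = ℓ := inv_eq_of_mul_eq_one_left hll
  have hk2 : k * k = 1 := by
    have h1 : k * k = g * (ℓ * ℓ) * g⁻¹ := by rw [hk]; simp [mul_assoc]
    rw [h1, hll, mul_one, mul_inv_cancel]
  have hkinv : k⁻¹ = k := inv_eq_of_mul_eq_one_left hk2
  have hkodd : ∀ n : ℕ, Odd n → k ^ n = k := by
    rintro n ⟨m, rfl⟩
    rw [pow_add, pow_mul, pow_two, hk2, one_pow, one_mul, pow_one]
  refine ⟨fun i => if (i : ℕ) = t - 1 then g * ℓ else k ^ (i : ℕ) * g, ?_⟩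
  funext i
  simp only [Pi.mul_apply, Pi.inv_apply, thrU, thrBase, Fin.val_mk]
  rcases Nat.eq_zero_or_pos (i : ℕ) with h0 | h0
  · -- i = 0
    split_ifs with h1 h2 h3 <;> try omega
    rw [h0, pow_zero, one_mul, mul_one, map_mul, hg, hθℓ, mul_inv_rev, hℓinv]
    exact (mul_assoc g ℓ g⁻¹).symm
  · rcases eq_or_ne (i : ℕ) (t - 1) with hlast | hlast
    · -- i = t - 1
      split_ifs with h1 h2 h3 <;> try omega
      have heq : (i : ℕ) - 1 = t - 2 := by omega
      have ht2 : Odd (t - 2) := by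
        obtain ⟨m, hm⟩ := htodd; exact ⟨m - 1, by omega⟩
      rw [heq, hkodd _ ht2, mul_assoc g ℓ ℓ, hll, mul_one, mul_inv_rev, hkinv]
      exact mul_inv_cancel_left g k
    · -- middle
      split_ifs with h1 h2 h3 <;> try omega
      have hpow : k ^ (i:ℕ) = k * k ^ ((i:ℕ) - 1) := by
        rw [← pow_succ']; congr 1; omega
      rw [mul_one, hpow]
      group

/-- If `t ≥ 3` is odd, `ℓ ∈ L^θ` is an involution, and the conjugacy class of `ℓ`
in the fixed-point subgroup `L^θ` (a rack under conjugation) is of type D, then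
`C_ℓ` is of type D. -/
theorem thrClass_isTypeD_of_fixedConjClass {L : Type*} [Group L] [Fintype L]
    (θ : L ≃* L) (t : ℕ) (ht : 3 ≤ t) (htodd : Odd t)
    (ℓ : L) (hθℓ : θ ℓ = ℓ) (hℓ2 : ℓ ^ 2 = 1) (hℓ1 : ℓ ≠ 1)
    (hD : IsTypeDOn (fun a b : L => a * b * a⁻¹)
      {y : L | ∃ g : L, θ g = g ∧ g * ℓ * g⁻¹ = y}) :
    IsTypeDOn (thrOp θ t) (thrClass θ t ℓ) := by
  obtain ⟨R, S, hRC, hSC, ⟨hRne, hRcl⟩, ⟨hSne, hScl⟩, hdisj, hRS, hSR, r, hr, s, hs, hne⟩ := hD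
  have hfixC : ∀ y ∈ {y : L | ∃ g : L, θ g = g ∧ g * ℓ * g⁻¹ = y}, θ y = y := by
    rintro y ⟨g, hg, rfl⟩
    simp [map_mul, map_inv, hg, hθℓ]
  have hmem : ∀ y ∈ {y : L | ∃ g : L, θ g = g ∧ g * ℓ * g⁻¹ = y},
      (fun _ => y : Fin t → L) ∈ thrClass θ t ℓ := by
    rintro y ⟨g, hg, rfl⟩
    exact diag_mem_thrClass θ t ht htodd hθℓ hℓ2 hg
  have hconj : ∀ a b : L, θ a = a → θ b = b → θ (a * b * a⁻¹) = a * b * a⁻¹ := by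
    intro a b ha hb; simp [map_mul, map_inv, ha, hb]
  refine ⟨(fun y => (fun _ => y : Fin t → L)) '' R, (fun y => (fun _ => y : Fin t → L)) '' S,
    ?_, ?_, ⟨?_, ?_⟩, ⟨?_, ?_⟩, ?_, ?_, ?_, ?_⟩
  · rintro _ ⟨a, ha, rfl⟩; exact hmem a (hRC ha)
  · rintro _ ⟨a, ha, rfl⟩; exact hmem a (hSC ha)
  · obtain ⟨a, ha⟩ := hRne; exact ⟨_, a, ha, rfl⟩
  · rintro _ ⟨a, ha, rfl⟩ _ ⟨b, hb, rfl⟩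
    rw [thrOp_diag θ t (hfixC _ (hRC ha)) (hfixC _ (hRC hb))]
    exact ⟨_, hRcl a ha b hb, rfl⟩
  · obtain ⟨a, ha⟩ := hSne; exact ⟨_, a, ha, rfl⟩
  · rintro _ ⟨a, ha, rfl⟩ _ ⟨b, hb, rfl⟩
    rw [thrOp_diag θ t (hfixC _ (hSC ha)) (hfixC _ (hSC hb))]
    exact ⟨_, hScl a ha b hb, rfl⟩
  · rw [Set.disjoint_left]
    rintro _ ⟨a, ha, rfl⟩ ⟨b, hb, hab⟩
    have hba : b = a := congrFun hab ⟨0, by omega⟩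
    exact Set.disjoint_left.mp hdisj ha (hba ▸ hb)
  · rintro _ ⟨a, ha, rfl⟩ _ ⟨b, hb, rfl⟩
    rw [thrOp_diag θ t (hfixC _ (hRC ha)) (hfixC _ (hSC hb))]
    exact ⟨_, hRS a ha b hb, rfl⟩
  · rintro _ ⟨a, ha, rfl⟩ _ ⟨b, hb, rfl⟩
    rw [thrOp_diag θ t (hfixC _ (hSC ha)) (hfixC _ (hRC hb))]
    exact ⟨_, hSR a ha b hb, rfl⟩
  · have hfr : θ r = r := hfixC _ (hRC hr)
    have hfs : θ s = s := hfixC _ (hSC hs)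
    have hf1 : θ (r * s * r⁻¹) = r * s * r⁻¹ := hconj _ _ hfr hfs
    have hf2 : θ (s * (r * s * r⁻¹) * s⁻¹) = s * (r * s * r⁻¹) * s⁻¹ := hconj _ _ hfs hf1
    refine ⟨_, ⟨r, hr, rfl⟩, _, ⟨s, hs, rfl⟩, ?_⟩
    rw [thrOp_diag θ t hfr hfs, thrOp_diag θ t hfs hf1, thrOp_diag θ t hfr hf2]
    intro h
    exact hne (congrFun h ⟨0, by omega⟩)
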